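/- For every integer n, the function ζ ↦ Lₙ(ζ) is continuously differentiable on (0, ∞) and infinitely differentiable on (0, ∞) \ {1}. -/

import Mathlib

open Real Filter MeasureTheory Convolution Metric

/-! ### Auxiliary: `w ↦ ‖w‖ • w` is C¹ on ℂ -/

noncomputable section

def phiF (w : ℂ) : ℂ →L[ℝ] ℂ :=
  ‖w‖ • ContinuousLinearMap.id ℝ ℂ + (fderiv ℝ (fun z : ℂ => ‖z‖) w).smulRight w

lemma phi_hasFDerivAt_ne (w : ℂ) (hw : w ≠ 0) :
    HasFDerivAt (fun z : ℂ => ‖z‖ • z) (phiF w) w := by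
  have h1 : DifferentiableAt ℝ (fun z : ℂ => ‖z‖) w :=
    ((contDiffAt_norm ℂ hw).differentiableAt one_ne_zero)
  exact h1.hasFDerivAt.smul (hasFDerivAt_id w)

lemma phi_hasFDerivAt_zero :
    HasFDerivAt (fun z : ℂ => ‖z‖ • z) (0 : ℂ →L[ℝ] ℂ) 0 := by
  rw [hasFDerivAt_iff_tendsto]
  have h : (fun x' : ℂ => ‖x' - 0‖⁻¹ * ‖‖x'‖ • x' - ‖(0:ℂ)‖ • (0:ℂ) - (0 : ℂ →L[ℝ] ℂ) (x' - 0)‖)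
      = fun x' : ℂ => ‖x'‖ := by
    ext x'
    rcases eq_or_ne x' 0 with rfl | hx
    · simp
    · have : (0:ℝ) < ‖x'‖ := norm_pos_iff.2 hx
      simp only [sub_zero, norm_zero, zero_smul, ContinuousLinearMap.zero_apply, norm_smul, norm_norm]
      field_simp [norm_smul]
  rw [h]
  simpa using continuous_norm.tendsto (0 : ℂ)

lemma contDiff_one_normSmul : ContDiff ℝ 1 (fun w : ℂ => ‖w‖ • w) := by
  rw [contDiff_one_iff_fderiv]
  have hdiff : Differentiable ℝ (fun z : ℂ => ‖z‖ • z) := by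
    intro w
    rcases eq_or_ne w 0 with rfl | hw
    · exact phi_hasFDerivAt_zero.differentiableAt
    · exact (phi_hasFDerivAt_ne w hw).differentiableAt
  refine ⟨hdiff, ?_⟩
  rw [continuous_iff_continuousAt]
  intro w
  rcases eq_or_ne w 0 with rfl | hw
  · have key : ∀ z : ℂ, ‖fderiv ℝ (fun z : ℂ => ‖z‖ • z) z‖ ≤ 2 * ‖z‖ := by
      intro z
      rcases eq_or_ne z 0 with rfl | hz
      · rw [phi_hasFDerivAt_zero.fderiv]; simp
      · rw [(phi_hasFDerivAt_ne z hz).fderiv]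
        have b1 : ‖(‖z‖ • ContinuousLinearMap.id ℝ ℂ)‖ ≤ ‖z‖ := by
          apply ContinuousLinearMap.opNorm_le_bound _ (norm_nonneg z)
          intro x
          simp [norm_smul, abs_of_nonneg (norm_nonneg z)]
        have b2 : ‖(fderiv ℝ (fun z : ℂ => ‖z‖) z).smulRight z‖ ≤ ‖z‖ := by
          rw [ContinuousLinearMap.norm_smulRight_apply]
          have := norm_fderiv_le_of_lipschitz ℝ (lipschitzWith_one_norm (E := ℂ)) (x₀ := z)
          calc ‖fderiv ℝ (fun z : ℂ => ‖z‖) z‖ * ‖z‖ ≤ 1 * ‖z‖ := by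
                apply mul_le_mul_of_nonneg_right _ (norm_nonneg z)
                simpa using this
            _ = ‖z‖ := one_mul _
        calc ‖phiF z‖ ≤ ‖(‖z‖ • ContinuousLinearMap.id ℝ ℂ)‖
              + ‖(fderiv ℝ (fun z : ℂ => ‖z‖) z).smulRight z‖ := norm_add_le _ _
          _ ≤ ‖z‖ + ‖z‖ := add_le_add b1 b2
          _ = 2 * ‖z‖ := by ring
    have htend : Tendsto (fun z : ℂ => fderiv ℝ (fun z : ℂ => ‖z‖ • z) z) (nhds 0) (nhds 0) := by
      apply squeeze_zero_norm key
      have : Tendsto (fun z : ℂ => 2 * ‖z‖) (nhds 0) (nhds (2 * ‖(0:ℂ)‖)) :=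
        (continuous_const.mul continuous_norm).tendsto 0
      simpa using this
    unfold ContinuousAt
    rwa [phi_hasFDerivAt_zero.fderiv]
  · have hc : ContDiffAt ℝ (1 + 1) (fun z : ℂ => ‖z‖ • z) w :=
      ((contDiffAt_norm ℂ hw).smul contDiffAt_id)
    exact (hc.fderiv_right (m := 1) le_rfl).continuousAt

end

/-- The `n`-th Fourier coefficient
`Lₙ(ζ) = (1/(2π)) ∫₀^{2π} |1 + ζe^{-iΘ}| (1 + ζe^{-iΘ}) e^{-inΘ} dΘ`. -/
noncomputable def fourierL (n : ℤ) (ζ : ℝ) : ℂ :=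
  (1 / (2 * π)) * ∫ Θ in (0:ℝ)..(2 * π),
    ((‖1 + (ζ : ℂ) * Complex.exp (-Complex.I * Θ)‖ : ℝ) : ℂ)
      * (1 + (ζ : ℂ) * Complex.exp (-Complex.I * Θ))
      * Complex.exp (-Complex.I * n * Θ)

noncomputable section

/-! ### Definitions -/

def hInt (n : ℤ) (ζ Θ : ℝ) : ℂ :=
  ((‖1 + (ζ : ℂ) * Complex.exp (-Complex.I * Θ)‖ : ℝ) : ℂ)
    * (1 + (ζ : ℂ) * Complex.exp (-Complex.I * Θ))
    * Complex.exp (-Complex.I * n * Θ)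

lemma fourierL_def (n : ℤ) (ζ : ℝ) :
    fourierL n ζ = (1 / (2 * (π:ℂ))) * ∫ Θ in (0:ℝ)..(2 * π), hInt n ζ Θ := rfl

def qc (z : ℂ) (Θ : ℝ) : ℂ := 1 + 2 * z * (Real.cos Θ : ℂ) + z ^ 2

def FF (n : ℤ) (z : ℂ) (Θ : ℝ) : ℂ :=
  qc z Θ ^ (1/2 : ℂ) * (1 + z * Complex.exp (-Complex.I * Θ))
    * Complex.exp (-Complex.I * n * Θ)

def FF' (n : ℤ) (z : ℂ) (Θ : ℝ) : ℂ :=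
  ((1/2 : ℂ) * qc z Θ ^ ((1/2 : ℂ) - 1) * (2 * (Real.cos Θ : ℂ) + 2 * z)
      * (1 + z * Complex.exp (-Complex.I * Θ))
    + qc z Θ ^ (1/2 : ℂ) * Complex.exp (-Complex.I * Θ))
    * Complex.exp (-Complex.I * n * Θ)

def Fc (n : ℤ) (z : ℂ) : ℂ := (1 / (2 * (π : ℂ))) * ∫ Θ in (0:ℝ)..(2*π), FF n z Θ

/-! ### The complex extension agrees with `fourierL` on the reals -/

lemma exp_cos (Θ : ℝ) : Complex.exp (Complex.I * Θ) + Complex.exp (-Complex.I * Θ)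
    = 2 * ((Real.cos Θ : ℝ) : ℂ) := by
  rw [Complex.ofReal_cos,
    show Complex.I * (Θ:ℂ) = (Θ:ℂ) * Complex.I from mul_comm _ _,
    show -Complex.I * (Θ:ℂ) = (-(Θ:ℂ)) * Complex.I by ring,
    Complex.exp_mul_I, Complex.exp_mul_I, Complex.sin_neg, Complex.cos_neg]
  ring

lemma qc_real (ζ Θ : ℝ) :
    qc (ζ : ℂ) Θ
      = ((Complex.normSq (1 + (ζ:ℂ) * Complex.exp (-Complex.I * Θ)) : ℝ) : ℂ) := by
  set w := 1 + (ζ:ℂ) * Complex.exp (-Complex.I * Θ) with hw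
  have hconj : (starRingEnd ℂ) w = 1 + (ζ:ℂ) * Complex.exp (Complex.I * Θ) := by
    rw [hw]
    simp only [map_add, map_mul, map_one, Complex.conj_ofReal, ← Complex.exp_conj, map_neg,
      Complex.conj_I, Complex.conj_ofReal, neg_neg]
  have hab : Complex.exp (-Complex.I * Θ) * Complex.exp (Complex.I * Θ) = 1 := by
    rw [← Complex.exp_add, show -Complex.I * (Θ:ℂ) + Complex.I * Θ = 0 by ring,
      Complex.exp_zero]
  rw [← Complex.mul_conj, hconj, hw, qc]
  have h := exp_cos Θ
  linear_combination (-(ζ:ℂ)) * h - (ζ:ℂ)^2 * hab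

lemma FF_real (n : ℤ) (ζ Θ : ℝ) : FF n (ζ : ℂ) Θ = hInt n ζ Θ := by
  rw [FF, hInt, qc_real]
  congr 2
  have h1 : ((1/2 : ℂ)) = ((1/2 : ℝ) : ℂ) := by norm_num
  rw [h1, ← Complex.ofReal_cpow (Complex.normSq_nonneg _) (1/2 : ℝ)]
  rw [← Real.sqrt_eq_rpow, ← Complex.norm_def]

lemma fourierL_eq_Fc (n : ℤ) (ζ : ℝ) : fourierL n ζ = Fc n (ζ : ℂ) := by
  rw [fourierL_def, Fc]
  congr 1
  apply intervalIntegral.integral_congr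
  intro Θ _
  exact (FF_real n ζ Θ).symm

/-! ### holomorphic differentiation under the integral -/

lemma qc_hasDerivAt (Θ : ℝ) (z : ℂ) :
    HasDerivAt (fun z : ℂ => qc z Θ) (2 * (Real.cos Θ : ℂ) + 2 * z) z := by
  have hfun : (fun z : ℂ => qc z Θ) = fun z : ℂ => 1 + 2 * (Real.cos Θ : ℂ) * z + z ^ 2 := by
    funext z; rw [qc]; ring
  rw [hfun]
  have h := ((hasDerivAt_id' (𝕜 := ℂ) (x := z)).const_mul
      (2 * (Real.cos Θ : ℂ))).const_add 1 |>.add (hasDerivAt_pow 2 z)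
  refine h.congr_deriv ?_
  push_cast
  ring

lemma oneAdd_hasDerivAt (Θ : ℝ) (z : ℂ) :
    HasDerivAt (fun z : ℂ => 1 + z * Complex.exp (-Complex.I * Θ))
      (Complex.exp (-Complex.I * Θ)) z := by
  simpa using ((hasDerivAt_id' (𝕜 := ℂ) (x := z)).mul_const
    (Complex.exp (-Complex.I * Θ))).const_add 1

lemma FF_hasDerivAt {n : ℤ} {z : ℂ} {Θ : ℝ} (hslit : qc z Θ ∈ Complex.slitPlane) :
    HasDerivAt (fun z => FF n z Θ) (FF' n z Θ) z := by
  have hA := (qc_hasDerivAt Θ z).cpow_const (c := (1/2 : ℂ)) hslit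
  have hB := oneAdd_hasDerivAt Θ z
  have h := (hA.mul hB).mul_const (Complex.exp (-Complex.I * n * Θ))
  exact h

lemma abs_exp_eq_one (x : ℝ) : ‖(Complex.exp (-Complex.I * x))‖ = 1 := by
  simp [Complex.norm_exp]

lemma abs_expN_eq_one (n : ℤ) (x : ℝ) :
    ‖(Complex.exp (-Complex.I * n * x))‖ = 1 := by
  simp [Complex.norm_exp]

open Complex in
lemma analyticAt_Fc (n : ℤ) {ζ₀ : ℝ} (hζ0 : 0 < ζ₀) (hζ1 : ζ₀ ≠ 1) :
    AnalyticAt ℂ (Fc n) (ζ₀ : ℂ) := by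
  set δ : ℝ := (1 - ζ₀)^2 / 2 with hδdef
  have hδpos : 0 < δ := by
    have h1 : (1:ℝ) - ζ₀ ≠ 0 := sub_ne_zero.2 (Ne.symm hζ1)
    positivity
  set r : ℝ := min 1 (δ / (3 + 2*ζ₀)) with hrdef
  have hrpos : 0 < r := lt_min one_pos (div_pos hδpos (by linarith))
  have hr1 : r ≤ 1 := min_le_left _ _
  set R : ℝ := ζ₀ + 1 with hRdef
  have hRpos : 0 < R := by positivity
  have hzR : ∀ z ∈ ball (ζ₀:ℂ) r, ‖z‖ ≤ R := by
    intro z hz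
    have h1 : ‖(z - ζ₀)‖ < r := by
      rw [← Complex.dist_eq]; exact mem_ball.mp hz
    calc ‖z‖ = ‖(z - ζ₀ + ζ₀)‖ := by ring_nf
      _ ≤ ‖(z - ζ₀)‖ + ‖(ζ₀:ℂ)‖ := norm_add_le _ _
      _ ≤ r + ζ₀ := by
          rw [Complex.norm_real, Real.norm_eq_abs, abs_of_pos hζ0]
          exact add_le_add h1.le le_rfl
      _ ≤ R := by rw [hRdef]; linarith
  have hre : ∀ z ∈ ball (ζ₀:ℂ) r, ∀ Θ : ℝ, δ ≤ (qc z Θ).re := by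
    intro z hz Θ
    have h0 : qc (ζ₀:ℂ) Θ = ((1 + 2*ζ₀*Real.cos Θ + ζ₀^2 : ℝ) : ℂ) := by
      rw [qc]; push_cast; ring
    have h2 : 2*δ ≤ (qc (ζ₀:ℂ) Θ).re := by
      rw [h0, Complex.ofReal_re]
      nlinarith [Real.neg_one_le_cos Θ, hζ0]
    have h3 : ‖(qc z Θ - qc (ζ₀:ℂ) Θ)‖ ≤ δ := by
      have hfact : qc z Θ - qc (ζ₀:ℂ) Θ = (z - ζ₀) * (2*(Real.cos Θ:ℂ) + z + ζ₀) := by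
        rw [qc, qc]; ring
      rw [hfact, norm_mul]
      have hz1 : ‖(z - ζ₀)‖ ≤ r := by
        rw [← Complex.dist_eq]; exact (mem_ball.mp hz).le
      have hz2 : ‖(2*(Real.cos Θ:ℂ) + z + ζ₀)‖ ≤ 3 + 2*ζ₀ := by
        calc ‖(2*(Real.cos Θ:ℂ) + z + ζ₀)‖
            ≤ ‖(2*(Real.cos Θ:ℂ) + z)‖ + ‖(ζ₀:ℂ)‖ := norm_add_le _ _
          _ ≤ ‖(2*(Real.cos Θ:ℂ))‖ + ‖z‖ + ‖(ζ₀:ℂ)‖ :=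
              add_le_add_left (norm_add_le _ _) _
          _ ≤ 2 + R + ζ₀ := by
              have hc : ‖(2*(Real.cos Θ:ℂ))‖ ≤ 2 := by
                rw [norm_mul, Complex.norm_real, Real.norm_eq_abs, Complex.norm_two]
                nlinarith [Real.abs_cos_le_one Θ]
              have := hzR z hz
              rw [Complex.norm_real, Real.norm_eq_abs, abs_of_pos hζ0]
              linarith
          _ = 3 + 2*ζ₀ := by rw [hRdef]; ring
      calc ‖(z - ζ₀)‖ * ‖(2*(Real.cos Θ:ℂ) + z + ζ₀)‖
          ≤ r * (3 + 2*ζ₀) := by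
            exact mul_le_mul hz1 hz2 (norm_nonneg _) hrpos.le
        _ ≤ (δ / (3 + 2*ζ₀)) * (3 + 2*ζ₀) := by
            apply mul_le_mul_of_nonneg_right (min_le_right _ _) (by linarith)
        _ = δ := div_mul_cancel₀ _ (by linarith)
    have h4 : (qc (ζ₀:ℂ) Θ).re - (qc z Θ).re ≤ δ := by
      have := Complex.abs_re_le_norm (qc z Θ - qc (ζ₀:ℂ) Θ)
      rw [Complex.sub_re] at this
      have h5 := abs_le.mp (this.trans h3)
      linarith [h5.1]
    linarith
  have hslit : ∀ z ∈ ball (ζ₀:ℂ) r, ∀ Θ : ℝ, qc z Θ ∈ Complex.slitPlane := by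
    intro z hz Θ
    exact Complex.mem_slitPlane_iff.2 (Or.inl (lt_of_lt_of_le hδpos (hre z hz Θ)))
  set C : ℝ := (1/2) * (Real.sqrt δ)⁻¹ * (2 + 2*R) * (1 + R) + (1 + R) with hCdef
  have hcont_q : ∀ z : ℂ, Continuous (fun Θ : ℝ => qc z Θ) := by
    intro z
    unfold qc
    exact (continuous_const.add (continuous_const.mul
      (Complex.continuous_ofReal.comp Real.continuous_cos))).add continuous_const
  have hcont_e : Continuous (fun Θ : ℝ => Complex.exp (-Complex.I * Θ)) :=
    Complex.continuous_exp.comp (continuous_const.mul Complex.continuous_ofReal)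
  have hcont_eN : Continuous (fun Θ : ℝ => Complex.exp (-Complex.I * n * Θ)) :=
    Complex.continuous_exp.comp (continuous_const.mul Complex.continuous_ofReal)
  have hcont_pow : ∀ (c : ℂ), ∀ z ∈ ball (ζ₀:ℂ) r, Continuous (fun Θ : ℝ => qc z Θ ^ c) := by
    intro c z hz
    rw [continuous_iff_continuousAt]
    intro Θ
    exact (continuousAt_cpow_const (hslit z hz Θ)).comp (hcont_q z).continuousAt
  have hcontFF : ∀ z ∈ ball (ζ₀:ℂ) r, Continuous (fun Θ : ℝ => FF n z Θ) := by
    intro z hz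
    unfold FF
    exact ((hcont_pow _ z hz).mul (continuous_const.add (continuous_const.mul hcont_e))).mul
      hcont_eN
  have hcontFF' : ∀ z ∈ ball (ζ₀:ℂ) r, Continuous (fun Θ : ℝ => FF' n z Θ) := by
    intro z hz
    unfold FF'
    apply Continuous.mul _ hcont_eN
    apply Continuous.add
    · apply Continuous.mul _ (continuous_const.add (continuous_const.mul hcont_e))
      apply Continuous.mul (continuous_const.mul (hcont_pow _ z hz))
      exact (continuous_const.mul (Complex.continuous_ofReal.comp Real.continuous_cos)).add
        continuous_const
    · exact (hcont_pow _ z hz).mul hcont_e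
  have hbound : ∀ z ∈ ball (ζ₀:ℂ) r, ∀ Θ : ℝ, ‖FF' n z Θ‖ ≤ C := by
    intro z hz Θ
    have hqabs_le : ‖(qc z Θ)‖ ≤ (1+R)^2 := by
      rw [qc]
      calc ‖(1 + 2*z*(Real.cos Θ:ℂ) + z^2)‖
          ≤ ‖(1 + 2*z*(Real.cos Θ:ℂ))‖ + ‖(z^2)‖ := norm_add_le _ _
        _ ≤ ‖(1:ℂ)‖ + ‖(2*z*(Real.cos Θ:ℂ))‖ + ‖(z^2)‖ :=
            add_le_add_left (norm_add_le _ _) _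
        _ ≤ 1 + 2*R + R^2 := by
            rw [norm_one, norm_pow]
            have h1 : ‖(2*z*(Real.cos Θ:ℂ))‖ ≤ 2*R := by
              rw [norm_mul, norm_mul, Complex.norm_two, Complex.norm_real, Real.norm_eq_abs]
              nlinarith [Real.abs_cos_le_one Θ, hzR z hz, norm_nonneg z]
            have h2 : ‖z‖ ^ 2 ≤ R^2 := by
              nlinarith [hzR z hz, norm_nonneg z]
            linarith
        _ = (1+R)^2 := by ring
    have hqabs_ge : δ ≤ ‖(qc z Θ)‖ := (hre z hz Θ).trans (Complex.re_le_norm _)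
    have hhalf_re : ((1/2 : ℂ)).re = (1/2 : ℝ) := by norm_num
    have hhalf_im : ((1/2 : ℂ)).im = 0 := by norm_num
    have hc1 : ‖(qc z Θ ^ (1/2:ℂ))‖ ≤ 1 + R := by
      have h := Complex.norm_cpow_le (qc z Θ) (1/2:ℂ)
      rw [hhalf_re, hhalf_im, mul_zero, Real.exp_zero, div_one] at h
      calc ‖(qc z Θ ^ (1/2:ℂ))‖ ≤ ‖(qc z Θ)‖ ^ (1/2:ℝ) := h
        _ = Real.sqrt (‖(qc z Θ)‖) := (Real.sqrt_eq_rpow _).symm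
        _ ≤ Real.sqrt ((1+R)^2) := Real.sqrt_le_sqrt hqabs_le
        _ = 1 + R := Real.sqrt_sq (by positivity)
    have hc2 : ‖(qc z Θ ^ ((1/2:ℂ) - 1))‖ ≤ (Real.sqrt δ)⁻¹ := by
      have h := Complex.norm_cpow_le (qc z Θ) ((1/2:ℂ) - 1)
      have hre2 : ((1/2:ℂ) - 1).re = -(1/2 : ℝ) := by norm_num [Complex.sub_re]
      have him2 : ((1/2:ℂ) - 1).im = 0 := by norm_num [Complex.sub_im]
      rw [hre2, him2, mul_zero, Real.exp_zero, div_one] at h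
      calc ‖(qc z Θ ^ ((1/2:ℂ) - 1))‖
          ≤ ‖(qc z Θ)‖ ^ (-(1/2:ℝ)) := h
        _ = (‖(qc z Θ)‖ ^ (1/2:ℝ))⁻¹ := by
            rw [Real.rpow_neg (norm_nonneg _)]
        _ = (Real.sqrt (‖(qc z Θ)‖))⁻¹ := by rw [Real.sqrt_eq_rpow]
        _ ≤ (Real.sqrt δ)⁻¹ := by
            apply inv_anti₀ (Real.sqrt_pos.2 hδpos)
            exact Real.sqrt_le_sqrt hqabs_ge
    have h2c2z : ‖(2*(Real.cos Θ:ℂ) + 2*z)‖ ≤ 2 + 2*R := by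
      calc ‖(2*(Real.cos Θ:ℂ) + 2*z)‖
          ≤ ‖(2*(Real.cos Θ:ℂ))‖ + ‖(2*z)‖ := norm_add_le _ _
        _ ≤ 2 + 2*R := by
            rw [norm_mul, norm_mul, Complex.norm_two, Complex.norm_real, Real.norm_eq_abs]
            nlinarith [Real.abs_cos_le_one Θ, hzR z hz]
    have honeadd : ‖(1 + z * Complex.exp (-Complex.I * Θ))‖ ≤ 1 + R := by
      calc ‖(1 + z * Complex.exp (-Complex.I * Θ))‖
          ≤ ‖(1:ℂ)‖ + ‖(z * Complex.exp (-Complex.I * Θ))‖ :=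
            norm_add_le _ _
        _ ≤ 1 + R := by
            rw [norm_one, norm_mul, abs_exp_eq_one, mul_one]
            exact add_le_add_right (hzR z hz) 1
    rw [FF', norm_mul, abs_expN_eq_one, mul_one]
    calc ‖((1/2 : ℂ) * qc z Θ ^ ((1/2 : ℂ) - 1) * (2 * (Real.cos Θ : ℂ) + 2 * z)
          * (1 + z * Complex.exp (-Complex.I * Θ))
          + qc z Θ ^ (1/2 : ℂ) * Complex.exp (-Complex.I * Θ))‖
        ≤ ‖((1/2 : ℂ) * qc z Θ ^ ((1/2 : ℂ) - 1) * (2 * (Real.cos Θ : ℂ) + 2 * z)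
          * (1 + z * Complex.exp (-Complex.I * Θ)))‖
          + ‖(qc z Θ ^ (1/2 : ℂ) * Complex.exp (-Complex.I * Θ))‖ :=
          norm_add_le _ _
      _ = (1/2) * ‖(qc z Θ ^ ((1/2 : ℂ) - 1))‖
            * ‖(2 * (Real.cos Θ : ℂ) + 2 * z)‖
            * ‖(1 + z * Complex.exp (-Complex.I * Θ))‖
            + ‖(qc z Θ ^ (1/2 : ℂ))‖ := by
          rw [norm_mul, norm_mul, norm_mul, norm_mul, abs_exp_eq_one, mul_one]
          norm_num
      _ ≤ (1/2) * (Real.sqrt δ)⁻¹ * (2 + 2*R) * (1 + R) + (1 + R) := by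
          gcongr
      _ = C := rfl
  have hdiff : DifferentiableOn ℂ (Fc n) (ball (ζ₀:ℂ) r) := by
    intro z₀ hz₀
    apply DifferentiableAt.differentiableWithinAt
    set ε : ℝ := r - dist z₀ (ζ₀:ℂ) with hεdef
    have hεpos : 0 < ε := sub_pos.2 (mem_ball.mp hz₀)
    have hsub : ball z₀ ε ⊆ ball (ζ₀:ℂ) r := ball_subset_ball' (by rw [hεdef]; ring_nf; rfl)
    have key := intervalIntegral.hasDerivAt_integral_of_dominated_loc_of_deriv_le
      (F := fun z Θ => FF n z Θ) (F' := fun z Θ => FF' n z Θ)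
      (bound := fun _ => C) (a := 0) (b := 2*π) (μ := volume) (x₀ := z₀) (ball_mem_nhds z₀ hεpos)
      ?_ ?_ ?_ ?_ ?_ ?_
    · exact (key.2.differentiableAt.const_mul (1 / (2 * (π : ℂ))))
    · filter_upwards [isOpen_ball.eventually_mem hz₀] with z hz using
        ((hcontFF z hz).aestronglyMeasurable)
    · exact ((hcontFF z₀ hz₀).intervalIntegrable _ _)
    · exact ((hcontFF' z₀ hz₀).aestronglyMeasurable)
    · exact Filter.Eventually.of_forall fun Θ _ z hz => hbound z (hsub hz) Θ
    · exact intervalIntegrable_const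
    · exact Filter.Eventually.of_forall fun Θ _ z hz => FF_hasDerivAt (hslit z (hsub hz) Θ)
  exact (hdiff.analyticOnNhd isOpen_ball) _ (mem_ball_self hrpos)

lemma part2 (n : ℤ) : ContDiffOn ℝ (⊤ : ℕ∞) (fourierL n) (Set.Ioi (0:ℝ) \ {1}) := by
  have h : AnalyticOnNhd ℝ (fourierL n) (Set.Ioi (0:ℝ) \ {1}) := by
    intro ζ₀ hζ₀
    have h1 : AnalyticAt ℂ (Fc n) (ζ₀ : ℂ) := analyticAt_Fc n hζ₀.1 hζ₀.2
    have h2 : AnalyticAt ℝ (Fc n) (ζ₀ : ℂ) := h1.restrictScalars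
    have h3 : AnalyticAt ℝ (fun ζ : ℝ => Fc n (ζ : ℂ)) ζ₀ :=
      h2.comp (Complex.ofRealCLM.analyticAt ζ₀)
    exact h3.congr (Filter.Eventually.of_forall fun ζ => (fourierL_eq_Fc n ζ).symm)
  exact h.contDiffOn_of_completeSpace


section part1


def chi (Θ : ℝ) : ℝ :=
  Real.smoothTransition Θ - Real.smoothTransition (Θ - 2 * π)

def gInt (n : ℤ) (ζ Θ : ℝ) : ℂ := hInt n ζ Θ * (chi Θ : ℂ)

lemma contDiff_one_smoothTransition : ContDiff ℝ 1 Real.smoothTransition := by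
  exact_mod_cast Real.smoothTransition.contDiff (n := 1)

lemma contDiff_chi : ContDiff ℝ 1 chi := by
  unfold chi
  exact contDiff_one_smoothTransition.sub
    (contDiff_one_smoothTransition.comp (contDiff_id.sub contDiff_const))

lemma contDiff_e1 : ContDiff ℝ 1
    (fun p : ℝ × ℝ => 1 + (p.1 : ℂ) * Complex.exp (-Complex.I * p.2)) := by
  apply contDiff_const.add
  apply (Complex.ofRealCLM.contDiff.comp contDiff_fst).mul
  have h1 : ContDiff ℝ 1 (fun p : ℝ × ℝ => -Complex.I * (p.2 : ℂ)) :=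
    contDiff_const.mul (Complex.ofRealCLM.contDiff.comp contDiff_snd)
  exact ((Complex.contDiff_exp (𝕜 := ℂ)).restrict_scalars ℝ).comp h1

lemma contDiff_eN1 (n : ℤ) : ContDiff ℝ 1
    (fun p : ℝ × ℝ => Complex.exp (-Complex.I * n * p.2)) := by
  have h1 : ContDiff ℝ 1 (fun p : ℝ × ℝ => -Complex.I * n * (p.2 : ℂ)) :=
    contDiff_const.mul (Complex.ofRealCLM.contDiff.comp contDiff_snd)
  exact ((Complex.contDiff_exp (𝕜 := ℂ)).restrict_scalars ℝ).comp h1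

lemma uncurry_gInt (n : ℤ) : Function.uncurry (gInt n) = fun p : ℝ × ℝ =>
    (‖(1 : ℂ) + (p.1 : ℂ) * Complex.exp (-Complex.I * p.2)‖
        • ((1 : ℂ) + (p.1 : ℂ) * Complex.exp (-Complex.I * p.2)))
      * Complex.exp (-Complex.I * n * p.2) * ((chi p.2 : ℝ) : ℂ) := by
  funext p
  simp only [Function.uncurry, gInt, hInt, Complex.real_smul]

lemma contDiff_gInt_one (n : ℤ) : ContDiff ℝ 1 (Function.uncurry (gInt n)) := by
  rw [uncurry_gInt]
  exact ((contDiff_one_normSmul.comp contDiff_e1).mul (contDiff_eN1 n)).mul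
    (Complex.ofRealCLM.contDiff.comp (contDiff_chi.comp contDiff_snd))

lemma chi_eq_zero {x : ℝ} (hx : x ≤ 0 ∨ 2*π+1 < x) : chi x = 0 := by
  have hπ := pi_gt_three
  rcases hx with hx | hx
  · rw [chi, Real.smoothTransition.zero_of_nonpos hx,
      Real.smoothTransition.zero_of_nonpos (by linarith), sub_zero]
  · rw [chi, Real.smoothTransition.one_of_one_le (by linarith),
      Real.smoothTransition.one_of_one_le (by linarith), sub_self]

lemma continuous_hInt (n : ℤ) (ζ : ℝ) : Continuous (hInt n ζ) := by
  unfold hInt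
  have he : Continuous (fun Θ : ℝ => Complex.exp (-Complex.I * Θ)) :=
    Complex.continuous_exp.comp (continuous_const.mul Complex.continuous_ofReal)
  have heN : Continuous (fun Θ : ℝ => Complex.exp (-Complex.I * n * Θ)) :=
    Complex.continuous_exp.comp (continuous_const.mul Complex.continuous_ofReal)
  have hw : Continuous (fun Θ : ℝ => 1 + (ζ:ℂ) * Complex.exp (-Complex.I * Θ)) :=
    continuous_const.add (continuous_const.mul he)
  exact ((Complex.continuous_ofReal.comp (continuous_norm.comp hw)).mul hw).mul heN

lemma continuous_gInt (n : ℤ) (ζ : ℝ) : Continuous (gInt n ζ) := by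
  unfold gInt
  exact (continuous_hInt n ζ).mul
    (Complex.continuous_ofReal.comp (contDiff_chi.continuous))

/-- convolution trick: smoothness of the full-line integral -/
lemma contDiffOn_param (n : ℤ) {s : Set ℝ} (hs : IsOpen s) {m : ℕ∞}
    (hg : ContDiffOn ℝ m (Function.uncurry (gInt n)) (s ×ˢ Set.univ)) :
    ContDiffOn ℝ m (fun ζ => ∫ Θ : ℝ, gInt n ζ Θ) s := by
  have hgs : ∀ p x, p ∈ s → x ∉ Set.Icc (0:ℝ) (2*π+1) → gInt n p x = 0 := by
    intro p x _ hx
    rw [Set.mem_Icc, not_and_or, not_le, not_le] at hx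
    have : chi x = 0 := chi_eq_zero (by rcases hx with hx | hx; exacts [Or.inl hx.le, Or.inr hx])
    simp [gInt, this]
  have h := contDiffOn_convolution_right_with_param_comp
    (L := (ContinuousLinearMap.lsmul ℝ ℝ : ℝ →L[ℝ] ℂ →L[ℝ] ℂ))
    (μ := (volume : Measure ℝ))
    (contDiffOn_const (c := (0:ℝ))) hs isCompact_Icc hgs
    (locallyIntegrable_const (1:ℝ)) hg
  apply h.congr
  intro ζ hζ
  rw [convolution_def]
  simp only [ContinuousLinearMap.lsmul_apply, one_smul, zero_sub]
  exact (integral_neg_eq_self (gInt n ζ) volume).symm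

lemma hInt_periodic (n : ℤ) (ζ u : ℝ) : hInt n ζ (u + 2*π) = hInt n ζ u := by
  have h1 : Complex.exp (-Complex.I * ((u + 2*π : ℝ) : ℂ)) = Complex.exp (-Complex.I * u) := by
    rw [Complex.ofReal_add, mul_add, Complex.exp_add]
    have h : Complex.exp (-Complex.I * ((2*π : ℝ) : ℂ)) = 1 := by
      have h2 := Complex.exp_int_mul_two_pi_mul_I (-1)
      rw [← h2]
      congr 1
      push_cast
      ring
    rw [h, mul_one]
  have h2 : Complex.exp (-Complex.I * n * ((u + 2*π : ℝ) : ℂ))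
      = Complex.exp (-Complex.I * n * u) := by
    rw [Complex.ofReal_add, mul_add, Complex.exp_add]
    have h : Complex.exp (-Complex.I * n * ((2*π : ℝ) : ℂ)) = 1 := by
      have h2 := Complex.exp_int_mul_two_pi_mul_I (-n)
      rw [← h2]
      congr 1
      push_cast
      ring
    rw [h, mul_one]
  rw [hInt, hInt, h1, h2]

lemma integral_gInt (n : ℤ) (ζ : ℝ) :
    ∫ Θ : ℝ, gInt n ζ Θ = ∫ Θ in (0:ℝ)..(2*π), hInt n ζ Θ := by
  have hπ := pi_gt_three
  have hInt_ii : ∀ a b : ℝ, IntervalIntegrable (hInt n ζ) volume a b :=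
    fun a b => (continuous_hInt n ζ).intervalIntegrable a b
  have hg_ii : ∀ a b : ℝ, IntervalIntegrable (gInt n ζ) volume a b :=
    fun a b => (continuous_gInt n ζ).intervalIntegrable a b
  have hψc : Continuous (fun Θ : ℝ => hInt n ζ Θ * (Real.smoothTransition Θ : ℂ)) :=
    (continuous_hInt n ζ).mul
      (Complex.continuous_ofReal.comp Real.smoothTransition.continuous)
  have hψ_ii : ∀ a b : ℝ, IntervalIntegrable
      (fun Θ : ℝ => hInt n ζ Θ * (Real.smoothTransition Θ : ℂ)) volume a b :=
    fun a b => hψc.intervalIntegrable a b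
  have hsupp : Function.support (gInt n ζ) ⊆ Set.Ioc 0 (2*π+1) := by
    intro x hx
    rw [Function.mem_support] at hx
    by_contra hmem
    rw [Set.mem_Ioc, not_and_or, not_lt, not_le] at hmem
    apply hx
    have : chi x = 0 := chi_eq_zero (by tauto)
    simp [gInt, this]
  rw [← intervalIntegral.integral_eq_integral_of_support_subset hsupp]
  rw [← intervalIntegral.integral_add_adjacent_intervals (hg_ii 0 (2*π)) (hg_ii (2*π) (2*π+1))]
  have e1 : ∫ Θ in (0:ℝ)..(2*π), gInt n ζ Θ
      = ∫ Θ in (0:ℝ)..(2*π), hInt n ζ Θ * (Real.smoothTransition Θ : ℂ) := by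
    apply intervalIntegral.integral_congr
    intro Θ hΘ
    rw [Set.uIcc_of_le (by linarith : (0:ℝ) ≤ 2*π)] at hΘ
    have h0 : Real.smoothTransition (Θ - 2*π) = 0 :=
      Real.smoothTransition.zero_of_nonpos (by linarith [hΘ.2])
    rw [gInt, chi, h0, sub_zero]
  have e2 : ∫ Θ in (2*π)..(2*π+1), gInt n ζ Θ
      = (∫ u in (0:ℝ)..1, hInt n ζ u)
        - ∫ u in (0:ℝ)..1, hInt n ζ u * (Real.smoothTransition u : ℂ) := by
    have hcongr : ∀ Θ ∈ Set.uIcc (2*π) (2*π+1),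
        gInt n ζ Θ = (fun u => hInt n ζ u
          - hInt n ζ u * (Real.smoothTransition u : ℂ)) (Θ - 2*π) := by
      intro Θ hΘ
      rw [Set.uIcc_of_le (by linarith : (2*π:ℝ) ≤ 2*π+1)] at hΘ
      have h1 : Real.smoothTransition Θ = 1 :=
        Real.smoothTransition.one_of_one_le (by linarith [hΘ.1])
      have h2 : hInt n ζ (Θ - 2*π + 2*π) = hInt n ζ (Θ - 2*π) := hInt_periodic n ζ _
      rw [sub_add_cancel] at h2
      simp only [gInt, chi, h1, h2]
      push_cast
      ring
    rw [intervalIntegral.integral_congr hcongr,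
      intervalIntegral.integral_comp_sub_right
        (fun u => hInt n ζ u - hInt n ζ u * (Real.smoothTransition u : ℂ)) (2*π),
      show (2*π - 2*π : ℝ) = 0 by ring, show (2*π+1 - 2*π : ℝ) = 1 by ring,
      intervalIntegral.integral_sub (hInt_ii 0 1) (hψ_ii 0 1)]
  have e3 : ∫ Θ in (0:ℝ)..(2*π), hInt n ζ Θ * (Real.smoothTransition Θ : ℂ)
      = (∫ Θ in (0:ℝ)..1, hInt n ζ Θ * (Real.smoothTransition Θ : ℂ))
        + ∫ Θ in (1:ℝ)..(2*π), hInt n ζ Θ := by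
    rw [← intervalIntegral.integral_add_adjacent_intervals (hψ_ii 0 1) (hψ_ii 1 (2*π))]
    congr 1
    apply intervalIntegral.integral_congr
    intro Θ hΘ
    rw [Set.uIcc_of_le (by linarith : (1:ℝ) ≤ 2*π)] at hΘ
    show hInt n ζ Θ * (Real.smoothTransition Θ : ℂ) = hInt n ζ Θ
    rw [Real.smoothTransition.one_of_one_le hΘ.1, Complex.ofReal_one, mul_one]
  have e4 : ∫ Θ in (0:ℝ)..(2*π), hInt n ζ Θ
      = (∫ Θ in (0:ℝ)..1, hInt n ζ Θ) + ∫ Θ in (1:ℝ)..(2*π), hInt n ζ Θ :=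
    (intervalIntegral.integral_add_adjacent_intervals (hInt_ii 0 1) (hInt_ii 1 (2*π))).symm
  rw [e1, e2, e3, e4]
  ring



lemma part1 (n : ℤ) : ContDiffOn ℝ 1 (fourierL n) (Set.Ioi (0:ℝ)) := by
  have hg : ContDiffOn ℝ ((1:ℕ∞) : WithTop ℕ∞) (Function.uncurry (gInt n))
      (Set.Ioi (0:ℝ) ×ˢ Set.univ) := by
    exact_mod_cast (contDiff_gInt_one n).contDiffOn
  have h := contDiffOn_param n isOpen_Ioi hg
  have h2 : ContDiffOn ℝ ((1:ℕ∞) : WithTop ℕ∞)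
      (fun ζ => (1 / (2 * (π:ℂ))) * ∫ Θ : ℝ, gInt n ζ Θ) (Set.Ioi 0) :=
    contDiffOn_const.mul h
  have h3 : ContDiffOn ℝ 1 (fun ζ => (1 / (2 * (π:ℂ))) * ∫ Θ : ℝ, gInt n ζ Θ)
      (Set.Ioi (0:ℝ)) := by exact_mod_cast h2
  apply h3.congr
  intro ζ hζ
  rw [fourierL_def, integral_gInt]

end part1
end

theorem stmt_14 (n : ℤ) :
    ContDiffOn ℝ 1 (fourierL n) (Set.Ioi (0:ℝ))
      ∧ ContDiffOn ℝ (⊤ : ℕ∞) (fourierL n) (Set.Ioi (0:ℝ) \ {1}) := by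
  exact ⟨part1 n, part2 n⟩
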